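/- For every environment model m, every behavior b, every strategy σ, and every state q: V_{fix(m,b)}(σ, q) ≤ V_m(σ, q). -/

import Mathlib

open scoped BigOperators

/-- A Markov decision process over finite state space `Q` and finite action space `A`:
transition probabilities `t`, reward function `r`, and discount factor `0 < γ < 1`. -/
structure MDP (Q A : Type*) [Fintype Q] [Fintype A] where
  /-- transition probabilities: `t q a` is a distribution over next states -/
  t : Q → A → Q → ℝ
  t_nonneg : ∀ q a q', 0 ≤ t q a q'
  t_sum : ∀ q a, (∑ q', t q a q') = 1
  /-- reward function -/
  r : Q → A → ℝ
  /-- discount factor -/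
  γ : ℝ
  γ_pos : 0 < γ
  γ_lt_one : γ < 1

/-- An environment model: an MDP with a distinguished "nothing" action `N`
labelling a zero-reward self-loop at every state. -/
structure EnvModel (Q A : Type*) [Fintype Q] [Fintype A] extends MDP Q A where
  /-- the distinguished "nothing" action -/
  N : A
  t_N : ∀ q, t q N q = 1
  r_N : ∀ q, r q N = 0

variable {Q A : Type*} [Fintype Q] [DecidableEq Q] [Fintype A] [DecidableEq A]

/-- `stepDist m σ i q q'`: the probability of being at state `q'` after `i` steps of
following the strategy `σ` from state `q`. -/
noncomputable def stepDist (m : MDP Q A) (σ : Q → A) : ℕ → Q → Q → ℝ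
  | 0 => fun q q' => if q = q' then 1 else 0
  | i + 1 => fun q q' => ∑ q'', stepDist m σ i q q'' * m.t q'' (σ q'') q'

/-- `V m σ q`: the expected total discounted reward of following strategy `σ` from
state `q`; it is the unique bounded solution of the Bellman equation
`V m σ q = r q (σ q) + γ * ∑ q', t q (σ q) q' * V m σ q'`. -/
noncomputable def V (m : MDP Q A) (σ : Q → A) (q : Q) : ℝ :=
  ∑' i : ℕ, m.γ ^ i * ∑ q', stepDist m σ i q q' * m.r q' (σ q')

/-- `V*_m(q) = max_σ V_m(σ,q)`. -/
noncomputable def Vstar (m : MDP Q A) (q : Q) : ℝ := ⨆ σ : Q → A, V m σ q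

/-- the set of optimal strategies -/
def opt (m : MDP Q A) : Set (Q → A) := {σ | ∀ q, V m σ q = Vstar m q}

/-- `Q_m(σ,q,a) = r(q,a) + γ * ∑_{q'} t(q,a)(q') * V_m(σ,q')`. -/
noncomputable def Qval (m : MDP Q A) (σ : Q → A) (q : Q) (a : A) : ℝ :=
  m.r q a + m.γ * ∑ q', m.t q a q' * V m σ q'

/-- `Q*_m(q,a) = r(q,a) + γ * ∑_{q'} t(q,a)(q') * V*_m(q')`. -/
noncomputable def Qstar (m : MDP Q A) (q : Q) (a : A) : ℝ :=
  m.r q a + m.γ * ∑ q', m.t q a q' * Vstar m q'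

/-- The set `U_m` of useless state-action pairs. -/
def Uset (m : EnvModel Q A) : Set (Q × A) :=
  {p | p.2 ≠ m.N ∧ ∀ σ : Q → A, Qval m.toMDP σ p.1 p.2 ≤ 0}

open Classical in
/-- `U(σ)`: replace `σ`'s action by the nothing action `N` at exactly those states `q`
with `⟨q, σ q⟩ ∈ U`. -/
noncomputable def applyU (m : EnvModel Q A) (U : Set (Q × A)) (σ : Q → A) : Q → A :=
  fun q => if (q, σ q) ∈ U then m.N else σ q

/-- A contingency `κ` is consistent with `m` when it only picks states of positive
transition probability. -/
def Consistent (m : MDP Q A) (κ : Q → A → ℕ → Q) : Prop :=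
  ∀ q a i, 0 < m.t q a (κ q a i)

/-- One step of the execution determined by `σ` and `κ`: the current state together
with the occurrence counts of each state-action pair so far. -/
def execStep (σ : Q → A) (κ : Q → A → ℕ → Q) :
    Q × (Q × A → ℕ) → Q × (Q × A → ℕ) :=
  fun s =>
    (κ s.1 (σ s.1) (s.2 (s.1, σ s.1)),
     fun p => if p = (s.1, σ s.1) then s.2 p + 1 else s.2 p)

/-- the `i`-th state of the execution `m(q,κ,σ)` -/
def execState (σ : Q → A) (κ : Q → A → ℕ → Q) (q : Q) (i : ℕ) : Q :=
  ((execStep σ κ)^[i] (q, fun _ => 0)).1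

/-- the execution `m(q,κ,σ) = [q₀, a₁, q₁, a₂, …]`, as the sequence of pairs
`i ↦ (q_i, a_{i+1})` (so `a_{i+1} = σ q_i`). -/
def execOf (σ : Q → A) (κ : Q → A → ℕ → Q) (q : Q) (i : ℕ) : Q × A :=
  (execState σ κ q i, σ (execState σ κ q i))

/-- the execution flattened into the alternating sequence `[q₀, a₁, q₁, a₂, …]`
(position `2i` holds `q_i`, position `2i+1` holds `a_{i+1}`). -/
def flatExec (e : ℕ → Q × A) (j : ℕ) : Q ⊕ A :=
  if j % 2 = 0 then Sum.inl (e (j / 2)).1 else Sum.inr (e (j / 2)).2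

open Classical in
/-- `active(e)`: the prefix of the alternating sequence of `e` strictly before the
first occurrence of the nothing action `N` (all of it if `N` never occurs);
positions past the cut-off are `none`. -/
noncomputable def activeSeq (N : A) (e : ℕ → Q × A) (j : ℕ) : Option (Q ⊕ A) :=
  if ∃ i, 2 * i + 1 ≤ j ∧ (e i).2 = N then none else some (flatExec e j)

/-- `f` is a subsequence of `g` (for possibly-cut-off sequences). -/
def OptSubseq {X : Type*} (f g : ℕ → Option X) : Prop :=
  ∃ φ : ℕ → ℕ, StrictMono φ ∧ ∀ j, f j ≠ none → f j = g (φ j)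

/-- `e₁` is a proper sub-execution of `e₂`: `active(e₁)` is a proper subsequence
of `active(e₂)`. -/
def ProperSubexec (N : A) (e₁ e₂ : ℕ → Q × A) : Prop :=
  OptSubseq (activeSeq N e₁) (activeSeq N e₂) ∧ activeSeq N e₁ ≠ activeSeq N e₂

/-- `σ' ≺ σ`: for every consistent contingency `κ` and state `q`, `m(q,κ,σ')` is a
proper sub-execution of or equal to `m(q,κ,σ)`, and for at least one consistent
contingency and state it is a proper sub-execution. -/
def prec (m : EnvModel Q A) (σ' σ : Q → A) : Prop :=
  (∀ κ, Consistent m.toMDP κ → ∀ q,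
      ProperSubexec m.N (execOf σ' κ q) (execOf σ κ q) ∨ execOf σ' κ q = execOf σ κ q) ∧
  (∃ κ q, Consistent m.toMDP κ ∧ ProperSubexec m.N (execOf σ' κ q) (execOf σ κ q))

/-- `opt*(m)`: optimal strategies that are non-redundant. -/
def optStar (m : EnvModel Q A) : Set (Q → A) :=
  {σ | σ ∈ opt m.toMDP ∧ ¬∃ σ' ∈ opt m.toMDP, prec m σ' σ}

/-- A behavior `[q₀, a₁, q₁, …, a_n, q_n]`: the list of pairs `(q_i, a_{i+1})`
for `0 ≤ i < n` together with the final state `q_n`. -/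
structure Behavior (Q A : Type*) where
  steps : List (Q × A)
  last : Q

/-- `strg(b)`: the strategies that could have produced the behavior `b`. -/
def strg (b : Behavior Q A) : Set (Q → A) :=
  {σ | ∀ p ∈ b.steps, σ p.1 = p.2}

/-- the behavior flattened into the alternating list `[q₀, a₁, q₁, …, a_n, q_n]` -/
def flatBehavior (b : Behavior Q A) : List (Q ⊕ A) :=
  (b.steps.flatMap fun p => [Sum.inl p.1, Sum.inr p.2]) ++ [Sum.inl b.last]

/-- the behavior `b` is a subsequence of the execution `e` -/
def BehvSubseq (b : Behavior Q A) (e : ℕ → Q × A) : Prop :=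
  ∃ φ : ℕ → ℕ, StrictMono φ ∧
    ∀ j (h : j < (flatBehavior b).length),
      (flatBehavior b).get ⟨j, h⟩ = flatExec e (φ j)

/-- `behv*(m)`: behaviors exhibited by some non-redundant optimal strategy under some
consistent contingency from some state. -/
def behvStar (m : EnvModel Q A) : Set (Behavior Q A) :=
  {b | ∃ σ ∈ optStar m, ∃ κ q, Consistent m.toMDP κ ∧ BehvSubseq b (execOf σ κ q)}

/-- the state `q_{i+1}` following the `i`-th step of the behavior `b` -/
def nextStateOf (b : Behavior Q A) (i : ℕ) : Q :=
  if h : i + 1 < b.steps.length then (b.steps.get ⟨i + 1, h⟩).1 else b.last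

/-- `b` could actually be observed: `t(q_i, a_{i+1})(q_{i+1}) > 0` for all `0 ≤ i < n`. -/
def Observable (m : MDP Q A) (b : Behavior Q A) : Prop :=
  ∀ i (h : i < b.steps.length),
    0 < m.t (b.steps.get ⟨i, h⟩).1 (b.steps.get ⟨i, h⟩).2 (nextStateOf b i)

/-- `r* = max_{q,a} |r(q,a)|` -/
noncomputable def rstar (m : MDP Q A) : ℝ := ⨆ p : Q × A, |m.r p.1 p.2|

/-- the reward function of `fix(m,b)`, defined recursively along the behavior -/
noncomputable def fixR (ω : ℝ) : (Q → A → ℝ) → List (Q × A) → Q → A → ℝ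
  | r, [] => r
  | r, s :: rest => fixR ω (fun q a => if q = s.1 ∧ a ≠ s.2 then -ω else r q a) rest

/-- `fix(m,b)`: the MDP `m` with its reward function modified so that deviating from
the actions of `b` at the states of `b` incurs the penalty `-ω`. -/
noncomputable def fixMDP (m : MDP Q A) (ω : ℝ) (b : Behavior Q A) : MDP Q A :=
  { m with r := fixR ω m.r b.steps }

lemma fixR_cases (ω : ℝ) (l : List (Q × A)) (r : Q → A → ℝ) (q : Q) (a : A) :
    fixR ω r l q a = r q a ∨ fixR ω r l q a = -ω := by
  induction l generalizing r with
  | nil => exact Or.inl rfl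
  | cons s rest ih =>
    rcases ih (fun q a => if q = s.1 ∧ a ≠ s.2 then -ω else r q a) with h | h
    · rw [fixR] at *
      rw [h]
      by_cases hc : q = s.1 ∧ a ≠ s.2
      · simp [hc]
      · simp [hc]
    · exact Or.inr h

lemma stepDist_nonneg (m : MDP Q A) (σ : Q → A) :
    ∀ i q q', 0 ≤ stepDist m σ i q q' := by
  intro i
  induction i with
  | zero => intro q q'; simp [stepDist]; split <;> norm_num
  | succ i ih =>
    intro q q'
    simp only [stepDist]
    exact Finset.sum_nonneg fun q'' _ => mul_nonneg (ih q q'') (m.t_nonneg _ _ _)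

lemma stepDist_sum (m : MDP Q A) (σ : Q → A) :
    ∀ i (q : Q), ∑ q', stepDist m σ i q q' = 1 := by
  intro i
  induction i with
  | zero => intro q; simp [stepDist]
  | succ i ih =>
    intro q
    simp only [stepDist]
    rw [Finset.sum_comm]
    calc ∑ q'' : Q, ∑ q' : Q, stepDist m σ i q q'' * m.t q'' (σ q'') q'
        = ∑ q'' : Q, stepDist m σ i q q'' * ∑ q' : Q, m.t q'' (σ q'') q' := by
          simp [Finset.mul_sum]
      _ = 1 := by simp [m.t_sum, ih q]

lemma stepDist_le_one (m : MDP Q A) (σ : Q → A) (i : ℕ) (q q' : Q) :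
    stepDist m σ i q q' ≤ 1 := by
  have := stepDist_sum m σ i q
  calc stepDist m σ i q q' ≤ ∑ x, stepDist m σ i q x :=
        Finset.single_le_sum (fun x _ => stepDist_nonneg m σ i q x) (Finset.mem_univ q')
    _ = 1 := this

lemma V_summable (m : MDP Q A) (σ : Q → A) (q : Q) :
    Summable (fun i : ℕ => m.γ ^ i * ∑ q', stepDist m σ i q q' * m.r q' (σ q')) := by
  set C : ℝ := ∑ q' : Q, |m.r q' (σ q')| with hC
  have hγ0 : (0:ℝ) ≤ m.γ := le_of_lt m.γ_pos
  refine Summable.of_norm_bounded ((summable_geometric_of_lt_one hγ0 m.γ_lt_one).mul_left C) ?_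
  intro i
  rw [norm_mul, Real.norm_eq_abs, Real.norm_eq_abs, abs_pow, abs_of_nonneg hγ0, mul_comm]
  gcongr
  calc |∑ q', stepDist m σ i q q' * m.r q' (σ q')|
      ≤ ∑ q', |stepDist m σ i q q' * m.r q' (σ q')| := Finset.abs_sum_le_sum_abs _ _
    _ ≤ C := by
        rw [hC]
        apply Finset.sum_le_sum
        intro x _
        rw [abs_mul, abs_of_nonneg (stepDist_nonneg m σ i q x)]
        calc stepDist m σ i q x * |m.r x (σ x)|
            ≤ 1 * |m.r x (σ x)| := by
              exact mul_le_mul_of_nonneg_right (stepDist_le_one m σ i q x) (abs_nonneg _)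
          _ = |m.r x (σ x)| := one_mul _

/-- `V_{fix(m,b)}(σ, q) ≤ V_m(σ, q)` for every strategy `σ` and state `q`. -/
theorem V_fixMDP_le_V
    {Q A : Type*} [Fintype Q] [DecidableEq Q] [Fintype A] [DecidableEq A]
    (m : EnvModel Q A) (b : Behavior Q A)
    (ω : ℝ) (hω : 2 * rstar m.toMDP / (1 - m.γ) < ω)
    (σ : Q → A) (q : Q) :
    V (fixMDP m.toMDP ω b) σ q ≤ V m.toMDP σ q := by
  have hr_le : ∀ q' a, |m.r q' a| ≤ rstar m.toMDP := by
    intro q' a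
    exact le_ciSup (f := fun p : Q × A => |m.toMDP.r p.1 p.2|)
      (Set.Finite.bddAbove (Set.finite_range _)) ⟨q', a⟩
  have hrs0 : 0 ≤ rstar m.toMDP := le_trans (abs_nonneg _) (hr_le q (σ q))
  have hγ1 : (0:ℝ) < 1 - m.γ := by linarith [m.γ_lt_one]
  have hω' : 2 * rstar m.toMDP < ω * (1 - m.γ) := by
    rw [div_lt_iff₀ hγ1] at hω; linarith
  have hωr : rstar m.toMDP < ω := by nlinarith [m.γ_pos, mul_nonneg hrs0 (le_of_lt m.γ_pos)]
  have hfix_le : ∀ q' a, fixR ω m.r b.steps q' a ≤ m.r q' a := by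
    intro q' a
    rcases fixR_cases ω b.steps m.r q' a with h | h
    · rw [h]
    · rw [h]
      have := hr_le q' a
      have := abs_le.mp this
      linarith
  unfold V
  have ht : (fixMDP m.toMDP ω b).t = m.toMDP.t := rfl
  have hγ : (fixMDP m.toMDP ω b).γ = m.γ := rfl
  have hstep : stepDist (fixMDP m.toMDP ω b) σ = stepDist m.toMDP σ := by
    funext i
    induction i with
    | zero => rfl
    | succ i ih => funext q q'; simp only [stepDist, ih, ht]
  rw [hstep, hγ]
  apply Summable.tsum_le_tsum _ _ (V_summable m.toMDP σ q)
  · intro i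
    apply mul_le_mul_of_nonneg_left _ (pow_nonneg (le_of_lt m.γ_pos) i)
    apply Finset.sum_le_sum
    intro x _
    exact mul_le_mul_of_nonneg_left (hfix_le x (σ x)) (stepDist_nonneg m.toMDP σ i q x)
  · have := V_summable (fixMDP m.toMDP ω b) σ q
    rwa [hstep, hγ] at this
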